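/- Let r ≥ 1 be an integer and τ ∈ ℂ with Im τ > 0. Define F : ℝ² → ℂ by F(p,q) = g₀(p + τq)·exp((2r+1)·π·i·q·(p+τq)). Then T_{(1/(2r+1),0)} F = F; that is, exp(−πi·q)·F(p + 1/(2r+1), q) = F(p,q) for all (p,q) ∈ ℝ². (This says that Ψ₀ is an eigenvector of T^*_{μ/(2r+1)} with eigenvalue 1.) -/

import Mathlib

/-- The theta function
`g₀(z) = Σ_{m∈ℤ} exp(m·π·i·((4r+2)·z + (2r+1)·m·τ))`. -/
noncomputable def gZero (r : ℕ) (τ : ℂ) (z : ℂ) : ℂ :=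
  ∑' m : ℤ, Complex.exp ((m : ℂ) * Real.pi * Complex.I *
      ((4 * (r : ℂ) + 2) * z + (2 * (r : ℂ) + 1) * (m : ℂ) * τ))

/-- The translation operator `T_x`:
`(T_x Φ)(p,q) = exp(−(2r+1)·π·i·(x₁·q − x₂·p))·Φ(p+x₁, q+x₂)`. -/
noncomputable def TOp (r : ℕ) (x : ℝ × ℝ) (Φ : ℝ → ℝ → ℂ) (p q : ℝ) : ℂ :=
  Complex.exp (-((2 * (r : ℂ) + 1) * Real.pi * Complex.I *
      ((x.1 : ℂ) * (q : ℂ) - (x.2 : ℂ) * (p : ℂ)))) * Φ (p + x.1) (q + x.2)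

/-! Each term of the series defining `g₀` is `1/(2r+1)`-periodic in `z`, because
`(4r+2)/(2r+1) = 2`; the quadratic factor of `F` then produces exactly the phase
`exp(πiq)` that the translation operator removes. -/

lemma two_mul_natCast_add_one_ne_zero (r : ℕ) : (2 * (r : ℂ) + 1) ≠ 0 := by
  exact_mod_cast (2 * r).succ_ne_zero

lemma gZero_add_inv (r : ℕ) (τ z : ℂ) :
    gZero r τ (z + 1 / (2 * (r : ℂ) + 1)) = gZero r τ z := by
  refine tsum_congr fun m => ?_
  have h := two_mul_natCast_add_one_ne_zero r
  calc Complex.exp ((m : ℂ) * Real.pi * Complex.I *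
          ((4 * (r : ℂ) + 2) * (z + 1 / (2 * (r : ℂ) + 1)) + (2 * (r : ℂ) + 1) * (m : ℂ) * τ))
      = Complex.exp ((m : ℂ) * Real.pi * Complex.I *
          ((4 * (r : ℂ) + 2) * z + (2 * (r : ℂ) + 1) * (m : ℂ) * τ)
          + m * (2 * Real.pi * Complex.I)) := by
        have h2 : (4 * (r : ℂ) + 2) * (1 / (2 * (r : ℂ) + 1)) = 2 := by
          rw [mul_one_div, div_eq_iff h]
          ring
        congr 1
        linear_combination (m : ℂ) * Real.pi * Complex.I * h2
    _ = _ := by rw [Complex.exp_add, Complex.exp_int_mul_two_pi_mul_I, mul_one]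

noncomputable def thetaSection (r : ℕ) (τ : ℂ) (p q : ℝ) : ℂ :=
  gZero r τ ((p : ℂ) + τ * (q : ℂ)) *
    Complex.exp ((2 * (r : ℂ) + 1) * Real.pi * Complex.I * (q : ℂ) * ((p : ℂ) + τ * (q : ℂ)))

lemma thetaSection_add_inv (r : ℕ) (τ : ℂ) (p q : ℝ) :
    Complex.exp (-(Real.pi * Complex.I * (q : ℂ))) *
        thetaSection r τ (p + 1 / (2 * (r : ℝ) + 1)) q = thetaSection r τ p q := by
  have h := two_mul_natCast_add_one_ne_zero r
  have harg : (((p + 1 / (2 * (r : ℝ) + 1) : ℝ) : ℂ) + τ * (q : ℂ))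
      = ((p : ℂ) + τ * (q : ℂ)) + 1 / (2 * (r : ℂ) + 1) := by
    push_cast
    ring
  rw [thetaSection, thetaSection, harg, gZero_add_inv, mul_left_comm, ← Complex.exp_add]
  congr 2
  field_simp
  ring

lemma TOp_inv_zero (r : ℕ) (Φ : ℝ → ℝ → ℂ) (p q : ℝ) :
    TOp r (1 / (2 * (r : ℝ) + 1), 0) Φ p q
      = Complex.exp (-(Real.pi * Complex.I * (q : ℂ))) * Φ (p + 1 / (2 * (r : ℝ) + 1)) q := by
  have h := two_mul_natCast_add_one_ne_zero r
  rw [TOp, add_zero]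
  congr 2
  push_cast
  field_simp
  ring

theorem statement12_general (r : ℕ) (τ : ℂ) :
    (∀ p q : ℝ,
      TOp r (1 / (2 * (r : ℝ) + 1), 0)
        (fun p' q' : ℝ => gZero r τ ((p' : ℂ) + τ * (q' : ℂ)) *
          Complex.exp ((2 * (r : ℂ) + 1) * Real.pi * Complex.I * (q' : ℂ) *
            ((p' : ℂ) + τ * (q' : ℂ)))) p q
      = gZero r τ ((p : ℂ) + τ * (q : ℂ)) *
          Complex.exp ((2 * (r : ℂ) + 1) * Real.pi * Complex.I * (q : ℂ) *
            ((p : ℂ) + τ * (q : ℂ))))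
    ∧ ∀ p q : ℝ,
      Complex.exp (-(Real.pi * Complex.I * (q : ℂ))) *
        (gZero r τ (((p + 1 / (2 * (r : ℝ) + 1) : ℝ) : ℂ) + τ * (q : ℂ)) *
          Complex.exp ((2 * (r : ℂ) + 1) * Real.pi * Complex.I * (q : ℂ) *
            (((p + 1 / (2 * (r : ℝ) + 1) : ℝ) : ℂ) + τ * (q : ℂ))))
      = gZero r τ ((p : ℂ) + τ * (q : ℂ)) *
          Complex.exp ((2 * (r : ℂ) + 1) * Real.pi * Complex.I * (q : ℂ) *
            ((p : ℂ) + τ * (q : ℂ))) := by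
  have hF := thetaSection_add_inv r τ
  exact ⟨fun p q => (TOp_inv_zero r _ p q).trans (hF p q), hF⟩

/-- the section `F(p,q) = g₀(p + τq)·exp((2r+1)·π·i·q·(p+τq))`
satisfies `T_{μ/(2r+1)} F = F`, i.e. `Ψ₀` is an eigenvector of
`T^*_{μ/(2r+1)}` with eigenvalue `1`. -/
theorem statement12 (r : ℕ) (hr : 1 ≤ r) (τ : ℂ) (hτ : 0 < τ.im) :
    (∀ p q : ℝ,
      TOp r (1 / (2 * (r : ℝ) + 1), 0)
        (fun p' q' : ℝ => gZero r τ ((p' : ℂ) + τ * (q' : ℂ)) *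
          Complex.exp ((2 * (r : ℂ) + 1) * Real.pi * Complex.I * (q' : ℂ) *
            ((p' : ℂ) + τ * (q' : ℂ)))) p q
      = gZero r τ ((p : ℂ) + τ * (q : ℂ)) *
          Complex.exp ((2 * (r : ℂ) + 1) * Real.pi * Complex.I * (q : ℂ) *
            ((p : ℂ) + τ * (q : ℂ))))
    ∧ ∀ p q : ℝ,
      Complex.exp (-(Real.pi * Complex.I * (q : ℂ))) *
        (gZero r τ (((p + 1 / (2 * (r : ℝ) + 1) : ℝ) : ℂ) + τ * (q : ℂ)) *
          Complex.exp ((2 * (r : ℂ) + 1) * Real.pi * Complex.I * (q : ℂ) *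
            (((p + 1 / (2 * (r : ℝ) + 1) : ℝ) : ℂ) + τ * (q : ℂ))))
      = gZero r τ ((p : ℂ) + τ * (q : ℂ)) *
          Complex.exp ((2 * (r : ℂ) + 1) * Real.pi * Complex.I * (q : ℂ) *
            ((p : ℂ) + τ * (q : ℂ))) :=
  statement12_general r τ
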